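/- arXiv:0908.0181 — 4 statements merged into one kernel-verified Lean document; each statement's English description precedes it below -/
import Mathlib

section
/- Let p(λ) be a monic degree-n polynomial with positive real roots λ₁,...,λₙ and mean root λ̄ = a₁/n. If for some index m with 2 ≤ m ≤ n equality aₘ = C(n,m)·λ̄^m holds (where aₘ is the m-th elementary symmetric function of the roots), then all roots are equal, i.e. λᵢ = λ̄ for all i. -/
/-!
Maclaurin's inequality `eₖ(s) ≤ C(n, k) μᵏ` for a multiset `s` of `n` nonnegative numbers with
mean `μ` follows by adding one element `t` at a time. The recursion
`eₖ₊₁(t ∷ s) = eₖ₊₁(s) + t eₖ(s)` and the bounds for `s` give `C(n + 1, k + 1)` times the tangent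
of `x ↦ xᵏ⁺¹` at the old mean, evaluated at the new mean; by Bernoulli's inequality this lies
below the power, strictly when `k + 1 ≥ 2` and the two means differ. So in the equality case,
removing any element `x` leaves the mean unchanged, which forces `x` to be the mean.
-/

open Finset Polynomial

/-- The `m`-th elementary symmetric function of `n` real numbers. -/
noncomputable def esymmFun {R : Type*} [CommSemiring R] (n : ℕ) (lam : Fin n → R) (m : ℕ) : R :=
  ∑ t ∈ Finset.univ.powersetCard m, ∏ i ∈ t, lam i

theorem pow_add_mul_lt_add_pow {R : Type*} [CommRing R] [LinearOrder R] [IsStrictOrderedRing R]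
    {a b : R} (ha : 0 ≤ a) (hab : 0 ≤ a + b) (hb : b ≠ 0) {n : ℕ} (hn : 2 ≤ n) :
    a ^ n + n * a ^ (n - 1) * b < (a + b) ^ n := by
  obtain ⟨k, rfl⟩ : ∃ k, n = k + 2 := ⟨n - 2, by omega⟩
  simp only [show k + 2 - 1 = k + 1 by omega]
  rcases ha.eq_or_lt with rfl | ha
  · have hb : 0 < b := lt_of_le_of_ne (by simpa using hab) hb.symm
    simpa using pow_pos hb (k + 2)
  -- one more factor `a + b` on Bernoulli for `k + 1` yields the strict excess `(k + 1) aᵏ b²`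
  have hexcess : 0 < ((k : R) + 1) * a ^ k * b ^ 2 := by positivity
  calc a ^ (k + 2) + ((k + 2 : ℕ) : R) * a ^ (k + 1) * b
      < a ^ (k + 2) + ((k + 2 : ℕ) : R) * a ^ (k + 1) * b + ((k : R) + 1) * a ^ k * b ^ 2 := by
        linarith
    _ = (a + b) * (a ^ (k + 1) + ((k + 1 : ℕ) : R) * a ^ (k + 1 - 1) * b) := by
        simp only [Nat.add_sub_cancel]; push_cast; ring
    _ ≤ (a + b) * (a + b) ^ (k + 1) :=
        mul_le_mul_of_nonneg_left (pow_add_mul_le_add_pow ha.le (by linarith) _) hab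
    _ = (a + b) ^ (k + 2) := by ring

namespace Multiset

variable {R : Type*}

theorem esymm_cons_succ [CommSemiring R] (t : R) (s : Multiset R) (k : ℕ) :
    (t ::ₘ s).esymm (k + 1) = s.esymm (k + 1) + t * s.esymm k := by
  simp [esymm, powersetCard_cons, map_map, sum_map_mul_left]

section OrderedField

variable [Field R] [LinearOrder R] [IsStrictOrderedRing R]

/-- The empty multiset has mean `0`, so `card_mul_mean` holds without exception. -/
def mean (s : Multiset R) : R := s.sum / card s

theorem card_mul_mean (s : Multiset R) : card s * s.mean = s.sum := by
  rcases eq_or_ne s 0 with rfl | hs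
  · simp [mean]
  · exact mul_div_cancel₀ _ (by simpa using hs)

theorem mean_nonneg {s : Multiset R} (hs : ∀ x ∈ s, 0 ≤ x) : 0 ≤ s.mean :=
  div_nonneg (sum_nonneg hs) (Nat.cast_nonneg _)

theorem card_add_one_mul_mean_cons (t : R) (s : Multiset R) :
    (card s + 1) * (t ::ₘ s).mean = t + card s * s.mean := by
  rw [card_mul_mean, ← sum_cons, ← card_mul_mean (t ::ₘ s), card_cons, Nat.cast_succ]

theorem esymm_cons_succ_le {t : R} {s : Multiset R} (ht : 0 ≤ t) {k : ℕ}
    (hk : s.esymm k ≤ (card s).choose k * s.mean ^ k)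
    (hk1 : s.esymm (k + 1) ≤ (card s).choose (k + 1) * s.mean ^ (k + 1)) :
    (t ::ₘ s).esymm (k + 1) ≤ (card s + 1).choose (k + 1) *
      (s.mean ^ (k + 1) + ((k : R) + 1) * s.mean ^ k * ((t ::ₘ s).mean - s.mean)) := by
  have hpascal :
      ((card s + 1).choose (k + 1) : R) = (card s).choose k + (card s).choose (k + 1) := by
    exact_mod_cast Nat.choose_succ_succ' _ _
  have habsorb :
      ((card s : R) + 1) * (card s).choose k = (card s + 1).choose (k + 1) * (k + 1) := by
    exact_mod_cast Nat.add_one_mul_choose_eq _ _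
  have hmean := card_add_one_mul_mean_cons t s
  rw [esymm_cons_succ]
  calc s.esymm (k + 1) + t * s.esymm k
      ≤ (card s).choose (k + 1) * s.mean ^ (k + 1) + t * ((card s).choose k * s.mean ^ k) := by
        gcongr
    _ = _ := by
        linear_combination -(s.mean ^ k * ((card s).choose k : R)) * hmean
          + s.mean ^ k * ((t ::ₘ s).mean - s.mean) * habsorb - s.mean ^ (k + 1) * hpascal

theorem esymm_le_choose_mul_mean_pow {s : Multiset R} (hs : ∀ x ∈ s, 0 ≤ x) (k : ℕ) :
    s.esymm k ≤ (card s).choose k * s.mean ^ k := by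
  induction s using Multiset.induction_on generalizing k with
  | empty => cases k <;> simp [esymm, powersetCard_zero_right]
  | cons t s ih =>
    have hs' : ∀ x ∈ s, 0 ≤ x := fun x hx => hs x (mem_cons_of_mem hx)
    cases k with
    | zero => simp [esymm]
    | succ k =>
      calc (t ::ₘ s).esymm (k + 1) ≤ _ :=
            esymm_cons_succ_le (hs t (mem_cons_self t s)) (ih hs' k) (ih hs' (k + 1))
        _ ≤ (card s + 1).choose (k + 1) * (t ::ₘ s).mean ^ (k + 1) := by
            gcongr
            simpa using pow_add_mul_le_add_pow (b := (t ::ₘ s).mean - s.mean) (mean_nonneg hs')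
              (by linarith [mean_nonneg hs, mean_nonneg hs']) (k + 1)
        _ = _ := by rw [card_cons]

theorem esymm_cons_lt_of_mean_cons_ne {t : R} {s : Multiset R} (ht : 0 ≤ t) (hs : ∀ x ∈ s, 0 ≤ x)
    {k : ℕ} (hk : 2 ≤ k) (hks : k ≤ card s + 1) (hne : (t ::ₘ s).mean ≠ s.mean) :
    (t ::ₘ s).esymm k < (card (t ::ₘ s)).choose k * (t ::ₘ s).mean ^ k := by
  obtain ⟨k, rfl⟩ : ∃ j, k = j + 1 := ⟨k - 1, by omega⟩
  have hts : ∀ x ∈ t ::ₘ s, 0 ≤ x := forall_mem_cons.2 ⟨ht, hs⟩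
  have hchoose : (0 : R) < (card s + 1).choose (k + 1) := by exact_mod_cast Nat.choose_pos hks
  calc (t ::ₘ s).esymm (k + 1) ≤ _ :=
        esymm_cons_succ_le ht (esymm_le_choose_mul_mean_pow hs k)
          (esymm_le_choose_mul_mean_pow hs (k + 1))
    _ < (card s + 1).choose (k + 1) * (t ::ₘ s).mean ^ (k + 1) := by
        gcongr
        simpa using pow_add_mul_lt_add_pow (b := (t ::ₘ s).mean - s.mean) (mean_nonneg hs)
          (by simpa using mean_nonneg hts) (sub_ne_zero.2 hne) hk
    _ = _ := by rw [card_cons]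

theorem eq_mean_of_esymm_eq {s : Multiset R} (hs : ∀ x ∈ s, 0 ≤ x) {k : ℕ} (hk : 2 ≤ k)
    (hks : k ≤ card s) (heq : s.esymm k = (card s).choose k * s.mean ^ k) :
    ∀ x ∈ s, x = s.mean := by
  intro x hx
  obtain ⟨r, rfl⟩ := exists_cons_of_mem hx
  have hr : ∀ y ∈ r, 0 ≤ y := fun y hy => hs y (mem_cons_of_mem hy)
  have hmean : (x ::ₘ r).mean = r.mean := by
    by_contra hne
    exact (esymm_cons_lt_of_mean_cons_ne (hs x hx) hr hk (by simpa using hks) hne).ne heq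
  have hcons := card_add_one_mul_mean_cons x r
  rw [hmean] at hcons ⊢
  linarith

end OrderedField

end Multiset

theorem stmt1_general (n : ℕ) (lam : Fin n → ℝ) (hpos : ∀ i, 0 < lam i)
    (lbar : ℝ) (hlbar : lbar = (∑ i, lam i) / n)
    (m : ℕ) (hm2 : 2 ≤ m) (hmn : m ≤ n)
    (heq : esymmFun n lam m = (n.choose m : ℝ) * lbar ^ m) :
    ∀ i, lam i = lbar := by
  set s : Multiset ℝ := univ.val.map lam
  have hcard : Multiset.card s = n := by simp [s]
  have hmean : s.mean = lbar := by rw [Multiset.mean, hcard, hlbar]; rfl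
  have hesymm : s.esymm m = esymmFun n lam m := Finset.esymm_map_val lam univ m
  have hs : ∀ x ∈ s, 0 ≤ x := by simpa [s] using fun i => (hpos i).le
  intro i
  rw [← hmean]
  refine Multiset.eq_mean_of_esymm_eq hs hm2 (hcard ▸ hmn) ?_ _
    (Multiset.mem_map_of_mem lam (mem_univ_val i))
  rw [hesymm, heq, hcard, hmean]

/-- If `p(λ) = ∏ (λ - λᵢ)` is a monic degree-`n` polynomial with positive
real roots and mean root `λ̄`, and equality `aₘ = C(n,m) ⬝ λ̄^m` holds for some index `m` with
`2 ≤ m ≤ n` (where `aₘ = eₘ(λ₁,…,λₙ)`), then all roots are equal to `λ̄`. -/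
theorem stmt1 (n : ℕ) (hn : 0 < n) (lam : Fin n → ℝ) (hpos : ∀ i, 0 < lam i)
    (p : Polynomial ℝ) (hp : p = ∏ i, (X - C (lam i)))
    (lbar : ℝ) (hlbar : lbar = (∑ i, lam i) / n)
    (m : ℕ) (hm2 : 2 ≤ m) (hmn : m ≤ n)
    (heq : esymmFun n lam m = (n.choose m : ℝ) * lbar ^ m) :
    ∀ i, lam i = lbar :=
  stmt1_general n lam hpos lbar hlbar m hm2 hmn heq
end

section
/- Let λ₁,...,λₙ be positive integers (n ≥ 2) whose sum equals 3(n) - δ for some integer δ with 1 ≤ δ ≤ n-1 (so the mean λ̄ = 3 - δ/n lies strictly between 2 and 3). Then e₂(λ₁,...,λₙ) ≤ 9·C(n-δ,2) + 6·δ·(n-δ) + 4·C(δ,2), where e₂ is the second elementary symmetric function. -/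
open Finset

/-- The second elementary symmetric function `e₂(λ₁,…,λₙ) = Σ_{i<j} λᵢλⱼ`. -/
def esymm2 (n : ℕ) (lam : Fin n → ℕ) : ℕ :=
  ∑ t ∈ Finset.univ.powersetCard 2, ∏ i ∈ t, lam i

lemma two_mul_choose_two (m : ℕ) : 2 * m.choose 2 = m * (m - 1) := by
  induction m with
  | zero => simp
  | succ k ih =>
    rw [Nat.choose_succ_succ, Nat.choose_one_right, Nat.mul_add, ih, Nat.succ_sub_one]
    cases k with
    | zero => simp
    | succ j => simp only [Nat.add_sub_cancel]; ring

lemma sq_sum_aux {ι : Type*} [DecidableEq ι] (s : Finset ι) (f : ι → ℕ) :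
    (∑ i ∈ s, f i)^2 = ∑ i ∈ s, f i^2 + 2 * ∑ t ∈ s.powersetCard 2, ∏ i ∈ t, f i := by
  induction s using Finset.induction with
  | empty => simp
  | @insert a s ha ih =>
    rw [Finset.sum_insert ha, Finset.sum_insert ha,
      show (2:ℕ) = 1 + 1 from rfl, Finset.powersetCard_succ_insert ha,
      Finset.sum_union, Finset.sum_image]
    · have hins : ∀ t ∈ s.powersetCard 1, ∏ i ∈ insert a t, f i = f a * ∏ i ∈ t, f i := by
        intro t ht
        have hat : a ∉ t := fun h => ha ((Finset.mem_powersetCard.1 ht).1 h)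
        rw [Finset.prod_insert hat]
      rw [Finset.sum_congr rfl hins, ← Finset.mul_sum, Finset.powersetCard_one,
        Finset.sum_map]
      simp only [Function.Embedding.coeFn_mk, Finset.prod_singleton]
      rw [add_sq, ih]
      ring
    · intro t ht u hu htu
      have hat : a ∉ t := fun h => ha ((Finset.mem_powersetCard.1 ht).1 h)
      have hau : a ∉ u := fun h => ha ((Finset.mem_powersetCard.1 hu).1 h)
      have := congrArg (Finset.erase · a) htu
      simpa [Finset.erase_insert hat, Finset.erase_insert hau] using this
    · rw [Finset.disjoint_right]
      rintro t ht ht'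
      simp only [Finset.mem_image] at ht
      obtain ⟨u, hu, rfl⟩ := ht
      exact ha ((Finset.mem_powersetCard.1 ht').1 (Finset.mem_insert_self a u))

/-- Let `λ₁,…,λₙ` be positive integers (`n ≥ 2`) whose sum equals
`3n - δ` for some integer `δ` with `1 ≤ δ ≤ n-1` (so the mean `λ̄ = 3 - δ/n` lies strictly
between 2 and 3).  Then `e₂(λ₁,…,λₙ) ≤ 9⬝C(n-δ,2) + 6⬝δ⬝(n-δ) + 4⬝C(δ,2)`. -/
theorem stmt3 (n : ℕ) (hn : 2 ≤ n) (lam : Fin n → ℕ) (hpos : ∀ i, 0 < lam i)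
    (δ : ℕ) (hδ1 : 1 ≤ δ) (hδ2 : δ ≤ n - 1)
    (hsum : (∑ i, lam i) + δ = 3 * n) :
    esymm2 n lam ≤ 9 * (n - δ).choose 2 + 6 * δ * (n - δ) + 4 * δ.choose 2 := by
  obtain ⟨m, hmδ⟩ : ∃ m, n = m + δ := ⟨n - δ, by omega⟩
  have hnm : n - δ = m := by omega
  have hm1 : 1 ≤ m := by omega
  have hS : ∑ i, lam i = 3 * m + 2 * δ := by omega
  have hid := sq_sum_aux (Finset.univ : Finset (Fin n)) lam
  have hid' : (3 * m + 2 * δ)^2 = (∑ i, lam i ^ 2) + 2 * esymm2 n lam := by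
    rw [← hS, hid]; rfl
  have hQ : 9 * m + 4 * δ ≤ ∑ i, lam i ^ 2 := by
    have h5 : ∀ i ∈ (Finset.univ : Finset (Fin n)), 5 * lam i ≤ lam i ^ 2 + 6 := by
      intro i _
      rcases le_or_gt (lam i) 2 with h | h
      · interval_cases (lam i) <;> norm_num
      · obtain ⟨j, hj⟩ : ∃ j, lam i = 3 + j := ⟨lam i - 3, by omega⟩
        rw [hj]; nlinarith [sq_nonneg j]
    have := Finset.sum_le_sum h5
    rw [← Finset.mul_sum, Finset.sum_add_distrib, Finset.sum_const, Finset.card_univ,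
      Fintype.card_fin, smul_eq_mul, hS] at this
    omega
  have key : 2 * (9 * m.choose 2 + 6 * δ * m + 4 * δ.choose 2) + (9 * m + 4 * δ)
      = (3 * m + 2 * δ)^2 := by
    have e1 : 2 * (9 * m.choose 2 + 6 * δ * m + 4 * δ.choose 2)
        = 9 * (2 * m.choose 2) + 12 * (δ * m) + 4 * (2 * δ.choose 2) := by ring
    obtain ⟨k, rfl⟩ : ∃ k, m = k + 1 := ⟨m - 1, by omega⟩
    obtain ⟨d, rfl⟩ : ∃ d, δ = d + 1 := ⟨δ - 1, by omega⟩
    rw [e1, two_mul_choose_two, two_mul_choose_two]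
    simp only [Nat.add_sub_cancel]
    ring
  clear hid
  rw [hnm]
  omega
end

section
/- Every 2-vertex-connected multigraph G with r ≥ 2 vertices, of which r-1 have degree 3 and one has degree r+1, contains a pair of vertices joined by exactly two parallel edges (a double edge), where one endpoint of the double edge has degree 3, provided r > 2. -/
open Finset Polynomial

section Multigraph

variable {V E : Type} [Fintype V] [DecidableEq V] [Fintype E] [DecidableEq E]

/-- The adjacency relation induced on `V` by the edges in `S` of the multigraph with
edge-endpoint maps `fst, snd`. -/
def mgRel (fst snd : E → V) (S : Finset E) (v w : V) : Prop :=
  ∃ e ∈ S, (fst e = v ∧ snd e = w) ∨ (fst e = w ∧ snd e = v)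

/-- The number of connected components of the spanning subgraph of the multigraph
`(V, E)` with edge set `S`. -/
noncomputable def compCount (fst snd : E → V) (S : Finset E) : ℕ :=
  Nat.card (SimpleGraph.fromRel (mgRel fst snd S)).ConnectedComponent

/-- The flow polynomial of a multigraph, via the subset expansion
`F(G;λ) = Σ_{S ⊆ E} (-1)^{|E|-|S|} λ^{|S| - |V| + c(S)}`. -/
noncomputable def flowPoly (fst snd : E → V) : Polynomial ℤ :=
  ∑ S : Finset E,
    C ((-1 : ℤ) ^ (Fintype.card E - S.card)) * X ^ (S.card + compCount fst snd S - Fintype.card V)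

/-- The degree of a vertex in a multigraph (loops count twice). -/
def mgDeg (fst snd : E → V) (v : V) : ℕ :=
  (Finset.univ.filter fun e => fst e = v).card + (Finset.univ.filter fun e => snd e = v).card

/-- A multigraph is connected if the simple graph of its adjacency relation is connected. -/
def mgConnected (fst snd : E → V) : Prop :=
  (SimpleGraph.fromRel (mgRel fst snd Finset.univ)).Connected

/-- A multigraph is bridgeless if deleting any one edge leaves the number of connected
components unchanged. -/
def mgBridgeless (fst snd : E → V) : Prop :=
  ∀ e : E, compCount fst snd (Finset.univ.erase e) = compCount fst snd Finset.univ

end Multigraph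

section TwoConnected

variable {V E : Type} [Fintype V] [DecidableEq V] [Fintype E] [DecidableEq E]

/-- Connectivity of the multigraph obtained by deleting the vertex `w`. -/
def mgDeleteConnected (fst snd : E → V) (w : V) : Prop :=
  (SimpleGraph.fromRel (fun v u : {x : V // x ≠ w} =>
    ∃ e : E, (fst e = ↑v ∧ snd e = ↑u) ∨ (fst e = ↑u ∧ snd e = ↑v))).Connected

/-- A multigraph is 2-vertex-connected if it is connected, has at least 3 vertices, and
remains connected after deleting any single vertex. -/
def mgTwoConnected (fst snd : E → V) : Prop :=
  3 ≤ Fintype.card V ∧ mgConnected fst snd ∧ ∀ w : V, mgDeleteConnected fst snd w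

end TwoConnected

/-!
By pigeonhole, the `r + 1` edges at `u` cannot all lead to distinct vertices among the other
`r - 1`, so some `v ≠ u` is joined to `u` by at least two edges. As `deg v = 3`, there are at most
three such edges, and not three: then every edge at `v` would lead to `u`, leaving `v` isolated in
`G - u`, which has at least two vertices.
-/

namespace Multigraph

variable {V E : Type} [DecidableEq V] (fst snd : E → V)

/-- The endpoint of `e` other than `u`; junk (`fst e`) when `e` is not incident to `u`. -/
def otherEnd (u : V) (e : E) : V :=
  if fst e = u then snd e else fst e

variable {fst snd} in
lemma otherEnd_ne (hloopless : ∀ e, fst e ≠ snd e) (u : V) (e : E) :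
    otherEnd fst snd u e ≠ u := by
  unfold otherEnd
  split_ifs with h
  · exact fun hs => hloopless e (h.trans hs.symm)
  · exact h

variable [Fintype E]

def incidentEdges (v : V) : Finset E :=
  univ.filter fun e => fst e = v ∨ snd e = v

def edgesBetween (a b : V) : Finset E :=
  univ.filter fun e => (fst e = a ∧ snd e = b) ∨ (fst e = b ∧ snd e = a)

variable {fst snd}

lemma card_incidentEdges (hloopless : ∀ e, fst e ≠ snd e) (v : V) :
    #(incidentEdges fst snd v) = mgDeg fst snd v := by
  classical
  rw [incidentEdges, filter_or, card_union_of_disjoint, mgDeg]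
  exact disjoint_filter.2 fun e _ h1 h2 => hloopless e (h1.trans h2.symm)

lemma edgesBetween_subset_incidentEdges_right (a b : V) :
    edgesBetween fst snd a b ⊆ incidentEdges fst snd b := by
  intro e
  simp only [edgesBetween, incidentEdges, mem_filter, mem_univ, true_and]
  rintro (⟨-, h⟩ | ⟨h, -⟩) <;> simp [h]

lemma filter_otherEnd_eq_edgesBetween (hloopless : ∀ e, fst e ≠ snd e) (u v : V) :
    (incidentEdges fst snd u).filter (fun e => otherEnd fst snd u e = v) =
      edgesBetween fst snd u v := by
  ext e
  simp only [incidentEdges, edgesBetween, otherEnd, mem_filter, mem_univ, true_and]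
  have := hloopless e
  grind

lemma exists_one_lt_card_edgesBetween [Fintype V] (hloopless : ∀ e, fst e ≠ snd e) {u : V}
    (hu : Fintype.card V ≤ mgDeg fst snd u) :
    ∃ v, v ≠ u ∧ 1 < #(edgesBetween fst snd u v) := by
  have hlt : #(univ.erase u) * 1 < #(incidentEdges fst snd u) := by
    rw [card_incidentEdges hloopless, card_erase_of_mem (mem_univ u), card_univ]
    have : 0 < Fintype.card V := Fintype.card_pos_iff.2 ⟨u⟩
    omega
  obtain ⟨v, hv, hfiber⟩ := exists_lt_card_fiber_of_mul_lt_card_of_maps_to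
    (fun e _ => mem_erase.2 ⟨otherEnd_ne hloopless u e, mem_univ _⟩) hlt
  have hvu := (mem_erase.1 hv).1
  exact ⟨v, hvu, filter_otherEnd_eq_edgesBetween hloopless u v ▸ hfiber⟩

lemma not_mgDeleteConnected_of_incidentEdges_subset [Fintype V] (hV : 2 < Fintype.card V)
    {u v : V} (hvu : v ≠ u) (hsub : incidentEdges fst snd v ⊆ edgesBetween fst snd u v) :
    ¬ mgDeleteConnected fst snd u := by
  intro hconn
  have : Nontrivial {x : V // x ≠ u} := by
    rw [← Fintype.one_lt_card_iff_nontrivial, Fintype.card_subtype_compl, Fintype.card_subtype_eq]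
    omega
  refine hconn.preconnected.not_isIsolated ⟨v, hvu⟩ fun x hadj => ?_
  obtain ⟨-, ⟨e, he⟩ | ⟨e, he⟩⟩ := hadj
  all_goals
    have hmem := hsub (by simp only [incidentEdges, mem_filter, mem_univ, true_and]; tauto)
    simp only [edgesBetween, mem_filter, mem_univ, true_and] at hmem
    have := x.2
    grind

lemma card_edgesBetween_lt_mgDeg [Fintype V] (hloopless : ∀ e, fst e ≠ snd e)
    (h2conn : mgTwoConnected fst snd) {u v : V} (hvu : v ≠ u) :
    #(edgesBetween fst snd u v) < mgDeg fst snd v := by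
  by_contra! hle
  rw [← card_incidentEdges hloopless] at hle
  have heq := eq_of_subset_of_card_le (edgesBetween_subset_incidentEdges_right u v) hle
  exact not_mgDeleteConnected_of_incidentEdges_subset (by have := h2conn.1; omega) hvu
    heq.ge (h2conn.2.2 u)

end Multigraph

open Multigraph in
theorem stmt8_general {V E : Type} [Fintype V] [DecidableEq V] [Fintype E]
    (fst snd : E → V) (hloopless : ∀ e : E, fst e ≠ snd e)
    (h2conn : mgTwoConnected fst snd)
    (r : ℕ) (hV : Fintype.card V = r)
    (u : V) (hu : mgDeg fst snd u = r + 1)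
    (hdeg : ∀ v : V, v ≠ u → mgDeg fst snd v = 3) :
    ∃ a b : V, a ≠ b ∧
      (Finset.univ.filter fun e : E =>
        (fst e = a ∧ snd e = b) ∨ (fst e = b ∧ snd e = a)).card = 2 ∧
      (mgDeg fst snd a = 3 ∨ mgDeg fst snd b = 3) := by
  obtain ⟨v, hvu, hmany⟩ := exists_one_lt_card_edgesBetween hloopless (u := u) (by omega)
  have hfew := card_edgesBetween_lt_mgDeg hloopless h2conn hvu
  rw [hdeg v hvu] at hfew
  exact ⟨u, v, hvu.symm, by rw [← edgesBetween]; omega, Or.inr (hdeg v hvu)⟩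

/-- Every 2-vertex-connected loopless multigraph `G` with `r > 2`
vertices, of which `r - 1` have degree 3 and one has degree `r + 1`, contains a pair of
vertices joined by exactly two parallel edges (a double edge) such that one endpoint of
the double edge has degree 3. -/
theorem stmt8 {V E : Type} [Fintype V] [DecidableEq V] [Fintype E] [DecidableEq E]
    (fst snd : E → V) (hloopless : ∀ e : E, fst e ≠ snd e)
    (h2conn : mgTwoConnected fst snd)
    (r : ℕ) (hV : Fintype.card V = r) (hr : 2 < r)
    (u : V) (hu : mgDeg fst snd u = r + 1)
    (hdeg : ∀ v : V, v ≠ u → mgDeg fst snd v = 3) :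
    ∃ a b : V, a ≠ b ∧
      (Finset.univ.filter fun e : E =>
        (fst e = a ∧ snd e = b) ∨ (fst e = b ∧ snd e = a)).card = 2 ∧
      (mgDeg fst snd a = 3 ∨ mgDeg fst snd b = 3) :=
  stmt8_general fst snd hloopless h2conn r hV u hu hdeg
end

section
/- Let M be a simple matroid of rank r with exactly 3r-3 elements in which every line (rank-2 flat) has at most 3 elements. Suppose the characteristic polynomial χ(M;λ) has only real roots and χ(M;2) = 0. Then the number γ₃ of 3-point lines of M satisfies γ₃ ≥ 3r - 5. -/
open Finset Polynomial

section MatroidDefs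

variable {α : Type} [Fintype α] [DecidableEq α]

/-- The rank of a set `X` in a matroid `M`: the largest size of an independent subset
of `X`. -/
noncomputable def mrk (M : Matroid α) (X : Set α) : ℕ :=
  sSup {n | ∃ I, M.Indep I ∧ I ⊆ X ∧ I.ncard = n}

/-- A matroid is simple if every pair of elements of the ground set is independent
(equivalently, it has no loops and no parallel pairs). -/
def mSimple (M : Matroid α) : Prop :=
  ∀ e f, e ∈ M.E → f ∈ M.E → M.Indep {e, f}

/-- The characteristic polynomial of a matroid on the ground set `α`, via the Whitney
rank expansion `χ(M;λ) = Σ_{A ⊆ E} (-1)^{|A|} λ^{r(E) - r(A)}` (which agrees with the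
Möbius-function definition for loopless matroids). -/
noncomputable def charPoly (M : Matroid α) : Polynomial ℤ :=
  ∑ A : Finset α, C ((-1 : ℤ) ^ A.card) * X ^ (mrk M Set.univ - mrk M (A : Set α))

/-- The number of lines (rank-2 flats) of `M` with exactly `k` points. -/
noncomputable def lineCount (M : Matroid α) (k : ℕ) : ℕ :=
  Nat.card {F : Set α | M.IsFlat F ∧ mrk M F = 2 ∧ F.ncard = k}

/-- Every line (rank-2 flat) of `M` has at most 3 points. -/
def linesAtMost3 (M : Matroid α) : Prop :=
  ∀ F : Set α, M.IsFlat F → mrk M F = 2 → F.ncard ≤ 3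

/-- An integer polynomial has only real roots. -/
def onlyRealRoots (p : Polynomial ℤ) : Prop :=
  (p.map (Int.castRingHom ℝ)).Splits

/-- An integer polynomial has only integral roots: every complex root is an integer. -/
def onlyIntegerRoots (p : Polynomial ℤ) : Prop :=
  ∀ z ∈ (p.map (Int.castRingHom ℂ)).roots, ∃ k : ℤ, z = (k : ℂ)

/-- A matroid is connected if no proper nonempty subset of the ground set gives an
additive separation of the rank. -/
def mConnected (M : Matroid α) : Prop :=
  M.E.Nonempty ∧ ∀ A : Set α, A ⊆ M.E → A.Nonempty → (M.E \ A).Nonempty →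
    mrk M A + mrk M (M.E \ A) ≠ mrk M M.E

/-- A flat `X` of `M` is modular if every line `L` with
`rank(X ∨ L) = rank(X) + 1` meets `X`. -/
def modularFlat (M : Matroid α) (Y : Set α) : Prop :=
  M.IsFlat Y ∧ ∀ L : Set α, M.IsFlat L → mrk M L = 2 →
    mrk M (Y ∪ L) = mrk M Y + 1 → (Y ∩ L).Nonempty

end MatroidDefs

/-!
Write `e = 3r - 3` for the number of elements and let `x₁, …, x_r` be the real roots of `χ`.
Whitney's expansion gives `Σ xᵢ = e` and `Σ_{i<j} xᵢ xⱼ = C(e,2) - γ₃`, so `Σ xᵢ² = e + 2γ₃`.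
Since `1` and `2` are roots and `3` is the mean of the remaining ones,
`5 = (1 - 3)² + (2 - 3)² ≤ Σ (xᵢ - 3)² = e + 2γ₃ - 6e + 9r`, which is `γ₃ ≥ 3r - 5`.
-/

namespace Multiset

variable {R : Type*}

theorem esymm_two_cons [CommSemiring R] (a : R) (s : Multiset R) :
    (a ::ₘ s).esymm 2 = s.esymm 2 + a * s.sum := by
  rw [esymm, esymm, powersetCard_cons 1, map_add, sum_add, powersetCard_one, map_map, map_map]
  simp only [Function.comp_def, prod_cons, prod_singleton]
  rw [sum_map_mul_left, map_id']

theorem sum_map_sq_eq [CommRing R] (s : Multiset R) :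
    (s.map (· ^ 2)).sum = s.sum ^ 2 - 2 * s.esymm 2 := by
  induction s using Multiset.induction with
  | empty => simp [esymm, powersetCard_zero_right 1]
  | cons a s ih => rw [sum_cons, map_cons, sum_cons, esymm_two_cons]; linear_combination ih

theorem sum_map_sub_sq [CommRing R] (s : Multiset R) (c : R) :
    (s.map fun x => (x - c) ^ 2).sum =
      (s.map (· ^ 2)).sum - 2 * c * s.sum + card s * c ^ 2 := by
  induction s using Multiset.induction with
  | empty => simp
  | cons a s ih => simp only [map_cons, sum_cons, card_cons, ih]; push_cast; ring

theorem add_le_sum_map_of_mem {β : Type*} [AddCommMonoid β] [PartialOrder β]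
    [IsOrderedAddMonoid β] {f : R → β} (hf : ∀ x, 0 ≤ f x) {s : Multiset R} {a b : R}
    (hab : a ≠ b) (ha : a ∈ s) (hb : b ∈ s) : f a + f b ≤ (s.map f).sum := by
  obtain ⟨t, rfl⟩ := exists_cons_of_mem ha
  obtain ⟨u, rfl⟩ := exists_cons_of_mem ((mem_cons.1 hb).resolve_left hab.symm)
  simp only [map_cons, sum_cons, ← add_assoc]
  exact le_add_of_nonneg_right (sum_nonneg fun y hy => by
    obtain ⟨x, -, rfl⟩ := mem_map.1 hy
    exact hf x)

end Multiset

namespace Polynomial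

variable {F : Type*} [Field F] {q : F[X]}

theorem Splits.sum_roots_sub_sq (hs : q.Splits) (hm : q.Monic) (hn : 2 ≤ q.natDegree) (c : F) :
    (q.roots.map fun x => (x - c) ^ 2).sum =
      q.nextCoeff ^ 2 - 2 * q.coeff (q.natDegree - 2) + 2 * c * q.nextCoeff +
        q.natDegree * c ^ 2 := by
  have hcard : Multiset.card q.roots = q.natDegree := splits_iff_card_roots.1 hs
  have hesymm : q.coeff (q.natDegree - 2) = q.roots.esymm 2 := by
    rw [coeff_eq_esymm_roots_of_splits hs (Nat.sub_le _ _), Nat.sub_sub_self hn, hm.leadingCoeff]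
    ring
  rw [Multiset.sum_map_sub_sq, hcard, hesymm, hs.nextCoeff_eq_neg_sum_roots_of_monic hm]
  linear_combination Multiset.sum_map_sq_eq q.roots

end Polynomial

section Rank

open Set

variable {α : Type} {M : Matroid α} {I X Y : Set α}

theorem mSimple.indep_of_card_le_two [DecidableEq α] (hE : M.E = univ) (hs : mSimple M)
    {A : Finset α} (hA : A.card ≤ 2) : M.Indep A := by
  have hmem (a : α) : a ∈ M.E := hE ▸ mem_univ a
  obtain h | h | h : A.card = 0 ∨ A.card = 1 ∨ A.card = 2 := by omega
  · simp [Finset.card_eq_zero.1 h]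
  · obtain ⟨a, rfl⟩ := Finset.card_eq_one.1 h
    simpa using hs a a (hmem a) (hmem a)
  · obtain ⟨a, b, -, rfl⟩ := Finset.card_eq_two.1 h
    simpa using hs a b (hmem a) (hmem b)

variable [Finite α]

theorem mrk_eq_ncard_of_isBasis' (hI : M.IsBasis' I X) : mrk M X = I.ncard := by
  refine le_antisymm (csSup_le ⟨0, ∅, M.empty_indep, empty_subset X, ncard_empty α⟩ ?_)
    (le_csSup ⟨Nat.card α, ?_⟩ ⟨I, hI.indep, hI.subset, rfl⟩)
  · rintro n ⟨J, hJ, hJX, rfl⟩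
    obtain ⟨K, hK, hJK⟩ := hJ.subset_isBasis'_of_subset hJX
    calc J.ncard ≤ K.ncard := ncard_le_ncard hJK
      _ = I.ncard := by rw [ncard_def, ncard_def, hK.encard_eq_encard hI]
  · rintro n ⟨J, -, -, rfl⟩
    exact ncard_le_card J

theorem Matroid.Indep.mrk_eq_ncard (hI : M.Indep I) : mrk M I = I.ncard :=
  mrk_eq_ncard_of_isBasis' hI.isBasis_self.isBasis'

theorem mrk_mono (h : X ⊆ Y) : mrk M X ≤ mrk M Y := by
  obtain ⟨I, hI⟩ := M.exists_isBasis' X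
  obtain ⟨J, hJ, hIJ⟩ := hI.indep.subset_isBasis'_of_subset (hI.subset.trans h)
  rw [mrk_eq_ncard_of_isBasis' hI, mrk_eq_ncard_of_isBasis' hJ]
  exact ncard_le_ncard hIJ

theorem Matroid.Indep.ncard_le_mrk (hI : M.Indep I) (hIX : I ⊆ X) : I.ncard ≤ mrk M X :=
  hI.mrk_eq_ncard ▸ mrk_mono hIX

theorem mrk_le_ncard (X : Set α) : mrk M X ≤ X.ncard := by
  obtain ⟨I, hI⟩ := M.exists_isBasis' X
  exact mrk_eq_ncard_of_isBasis' hI ▸ ncard_le_ncard hI.subset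

theorem mrk_closure (X : Set α) : mrk M (M.closure X) = mrk M X := by
  obtain ⟨I, hI⟩ := M.exists_isBasis' X
  rw [mrk_eq_ncard_of_isBasis' hI, mrk_eq_ncard_of_isBasis' hI.isBasis_closure_right.isBasis']

theorem mSimple.min_card_two_le_mrk [DecidableEq α] (hE : M.E = univ) (hs : mSimple M)
    (A : Finset α) : min A.card 2 ≤ mrk M A := by
  obtain ⟨B, hBA, hB⟩ := Finset.exists_subset_card_eq (min_le_left A.card 2)
  have hBI := hs.indep_of_card_le_two hE (hB ▸ min_le_right _ _)
  simpa [hB] using hBI.ncard_le_mrk (Finset.coe_subset.2 hBA)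

theorem ncard_closure_le_three (hl : linesAtMost3 M) (h : mrk M X = 2) :
    (M.closure X).ncard ≤ 3 :=
  hl _ (M.isFlat_closure X) (by rw [mrk_closure, h])

theorem ncard_le_three_of_mrk_eq_two (hE : M.E = univ) (hl : linesAtMost3 M) (h : mrk M X = 2) :
    X.ncard ≤ 3 :=
  (ncard_le_ncard (M.subset_closure X (hE ▸ subset_univ X))).trans (ncard_closure_le_three hl h)

theorem isFlat_of_mrk_eq_two_of_ncard_eq_three (hE : M.E = univ) (hl : linesAtMost3 M)
    (h2 : mrk M X = 2) (h3 : X.ncard = 3) : M.IsFlat X := by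
  have hX : X = M.closure X := eq_of_subset_of_ncard_le (M.subset_closure X (hE ▸ subset_univ X))
    (h3 ▸ ncard_closure_le_three hl h2)
  exact hX ▸ M.isFlat_closure X

end Rank

section CharPoly

variable {α : Type} [Fintype α] {M : Matroid α} {r : ℕ}

noncomputable def rankTwoTriples (M : Matroid α) : Finset (Finset α) :=
  univ.filter fun A : Finset α => A.card = 3 ∧ mrk M A = 2

theorem lineCount_three_eq_card_rankTwoTriples (hE : M.E = Set.univ) (hl : linesAtMost3 M) :
    lineCount M 3 = (rankTwoTriples M).card := by
  have hset : {F : Set α | M.IsFlat F ∧ mrk M F = 2 ∧ F.ncard = 3} =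
      (↑) '' (rankTwoTriples M : Set (Finset α)) := by
    ext F
    simp only [rankTwoTriples, Set.mem_ofPred, coe_filter, mem_univ, true_and,
      Set.mem_image]
    constructor
    · rintro ⟨-, h2, h3⟩
      refine ⟨F.toFinite.toFinset, ?_, by simp⟩
      rw [Set.Finite.coe_toFinset, ← Set.ncard_eq_toFinset_card F]
      exact ⟨h3, h2⟩
    · rintro ⟨A, ⟨h3, h2⟩, rfl⟩
      rw [Set.ncard_coe_finset]
      exact ⟨isFlat_of_mrk_eq_two_of_ncard_eq_three hE hl h2 (by simpa), h2, h3⟩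
  rw [lineCount, Nat.card_coe_set_eq, hset, Set.ncard_image_of_injective _ coe_injective,
    Set.ncard_coe_finset]

theorem charPoly_coeff (hr : mrk M Set.univ = r) (j : ℕ) :
    (charPoly M).coeff j =
      ∑ A ∈ univ.filter (fun A : Finset α => mrk M A + j = r), (-1 : ℤ) ^ A.card := by
  subst hr
  rw [charPoly, finsetSum_coeff, sum_filter]
  refine sum_congr rfl fun A _ => ?_
  have := mrk_mono (M := M) (Set.subset_univ (A : Set α))
  rw [coeff_C_mul, coeff_X_pow]
  split_ifs <;> omega

theorem charPoly_coeff_rank (hE : M.E = Set.univ) (hs : mSimple M) (hr : mrk M Set.univ = r) :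
    (charPoly M).coeff r = 1 := by
  classical
  have hfilter : univ.filter (fun A : Finset α => mrk M A + r = r) = {∅} := by
    ext A
    have := hs.min_card_two_le_mrk hE A
    have := mrk_le_ncard (M := M) A
    simp only [mem_filter, mem_univ, true_and, mem_singleton, ← card_eq_zero,
      Set.ncard_coe_finset] at *
    omega
  rw [charPoly_coeff hr, hfilter, sum_singleton, card_empty, pow_zero]

theorem charPoly_natDegree (hE : M.E = Set.univ) (hs : mSimple M) (hr : mrk M Set.univ = r) :
    (charPoly M).natDegree = r := by
  refine natDegree_eq_of_le_of_coeff_ne_zero (natDegree_le_iff_coeff_eq_zero.2 fun j hj => ?_)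
    (by simp [charPoly_coeff_rank hE hs hr])
  rw [charPoly_coeff hr]
  exact sum_eq_zero fun A hA => by simp only [mem_filter, mem_univ, true_and] at hA; omega

theorem charPoly_monic (hE : M.E = Set.univ) (hs : mSimple M) (hr : mrk M Set.univ = r) :
    (charPoly M).Monic := by
  rw [Monic, leadingCoeff, charPoly_natDegree hE hs hr, charPoly_coeff_rank hE hs hr]

theorem charPoly_coeff_rank_sub_one [DecidableEq α] (hE : M.E = Set.univ) (hs : mSimple M)
    (hr : mrk M Set.univ = r) (hr1 : 1 ≤ r) :
    (charPoly M).coeff (r - 1) = -Fintype.card α := by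
  have hfilter :
      univ.filter (fun A : Finset α => mrk M A + (r - 1) = r) = powersetCard 1 univ := by
    ext A
    have := hs.min_card_two_le_mrk hE A
    have := mrk_le_ncard (M := M) A
    simp only [mem_filter, mem_univ, true_and, mem_powersetCard, subset_univ,
      Set.ncard_coe_finset] at *
    omega
  simp [charPoly_coeff hr, hfilter, sum_powersetCard]

theorem charPoly_coeff_rank_sub_two [DecidableEq α] (hE : M.E = Set.univ) (hs : mSimple M)
    (hl : linesAtMost3 M) (hr : mrk M Set.univ = r) (hr2 : 2 ≤ r) :
    (charPoly M).coeff (r - 2) = (Fintype.card α).choose 2 - (rankTwoTriples M).card := by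
  have hfilter : univ.filter (fun A : Finset α => mrk M A + (r - 2) = r) =
      powersetCard 2 univ ∪ rankTwoTriples M := by
    ext A
    have := hs.min_card_two_le_mrk hE A
    have := mrk_le_ncard (M := M) A
    have := ncard_le_three_of_mrk_eq_two (X := A) hE hl
    simp only [rankTwoTriples, mem_filter, mem_union, mem_univ, true_and, mem_powersetCard,
      subset_univ, Set.ncard_coe_finset] at *
    omega
  have hdisj : Disjoint (powersetCard 2 univ) (rankTwoTriples M) := by
    rw [disjoint_left]
    intro A h2 h3
    simp only [rankTwoTriples, mem_filter, mem_powersetCard] at h2 h3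
    omega
  have htriples : ∑ A ∈ rankTwoTriples M, (-1 : ℤ) ^ A.card = -(rankTwoTriples M).card := by
    rw [sum_congr rfl fun A hA => by rw [(mem_filter.1 hA).2.1]]
    simp
  rw [charPoly_coeff hr, hfilter, sum_union hdisj, sum_powersetCard, htriples]
  simp [sub_eq_add_neg]

theorem charPoly_eval_one [Nonempty α] (M : Matroid α) : (charPoly M).eval 1 = 0 := by
  simp only [charPoly, eval_finsetSum, eval_mul, eval_C, eval_pow, eval_X, one_pow, mul_one]
  rw [← powerset_univ]
  exact sum_powerset_neg_one_pow_card_of_nonempty univ_nonempty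

end CharPoly

/-- Let `M` be a simple matroid of rank `r` with exactly `3r - 3`
elements in which every line has at most 3 elements.  Suppose the characteristic
polynomial `χ(M;λ)` has only real roots and `χ(M;2) = 0`.  Then the number `γ₃` of
3-point lines of `M` satisfies `γ₃ ≥ 3r - 5`. -/
theorem stmt10 {α : Type} [Fintype α] [DecidableEq α] (M : Matroid α)
    (hE : M.E = Set.univ) (hsimple : mSimple M)
    (r : ℕ) (hr : mrk M Set.univ = r)
    (hcard : Fintype.card α + 3 = 3 * r)
    (hlines : linesAtMost3 M)
    (hreal : onlyRealRoots (charPoly M))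
    (h2 : (charPoly M).eval 2 = 0) :
    3 * r ≤ lineCount M 3 + 5 := by
  have hr2 : 2 ≤ r := by
    have := mrk_le_ncard (M := M) Set.univ
    rw [hr, Set.ncard_univ, Nat.card_eq_fintype_card] at this
    omega
  have : Nonempty α := Fintype.card_pos_iff.1 (by omega)
  set q := (charPoly M).map (Int.castRingHom ℝ)
  have hmonic : q.Monic := (charPoly_monic hE hsimple hr).map _
  have hdeg : q.natDegree = r := by
    rw [(charPoly_monic hE hsimple hr).natDegree_map, charPoly_natDegree hE hsimple hr]
  have hroot (z : ℤ) (hz : (charPoly M).eval z = 0) : (z : ℝ) ∈ q.roots := by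
    rw [mem_roots hmonic.ne_zero, IsRoot, eval_map, eval₂_at_intCast, Int.cast_id, hz, map_zero]
  have key := Multiset.add_le_sum_map_of_mem (f := fun x : ℝ => (x - 3) ^ 2) (s := q.roots)
    (fun x => sq_nonneg _) (by norm_num : (1 : ℝ) ≠ 2)
    (by exact_mod_cast hroot 1 (charPoly_eval_one M)) (by exact_mod_cast hroot 2 h2)
  rw [hreal.sum_roots_sub_sq hmonic (hdeg ▸ hr2),
    nextCoeff_of_natDegree_pos (by omega : 0 < q.natDegree), hdeg, coeff_map, coeff_map,
    charPoly_coeff_rank_sub_one hE hsimple hr (by omega),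
    charPoly_coeff_rank_sub_two hE hsimple hlines hr hr2,
    ← lineCount_three_eq_card_rankTwoTriples hE hlines] at key
  have hcardR : (Fintype.card α : ℝ) + 3 = 3 * r := by exact_mod_cast hcard
  simp only [eq_intCast, Int.cast_neg, Int.cast_sub, Int.cast_natCast, Nat.cast_choose_two] at key
  have : (3 * r : ℝ) ≤ lineCount M 3 + 5 := by linarith
  exact_mod_cast this
end
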